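/- Let T ≥ 500 be a natural number and set b = √(2·log T − 2·log(3·2^{−3/2}·(2·log T)^{3/2})). Then 1 − exp(−(T/2)·Φᶜ(b)) ≥ 1 − T^{−1/(2√π)}; equivalently, exp(−(T/2)·Φᶜ(b)) ≤ T^{−1/(2√π)}. -/

import Mathlib

/-! With `L = 2 log T` and `c = 3·2^{-3/2}·L^{3/2}` we have `b² = L - 2 log c`, so
`φ(b) = c / (√(2π) T)` exactly. Gordon's bound `φ(x)·x/(x²+1) ≤ Φᶜ(x)` (the derivative of
`-φ(u)·u/(u²+1)` is at most `φ(u)`) then gives `(T/2)·Φᶜ(b) ≥ 3 L √L b / (8 √π (b² + 1))`, which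
is at least `L/(4√π) = log T/(2√π)` as soon as `2 ≤ b² ≤ L`; this holds once `L ≥ 10`,
i.e. `T ≥ e⁵`. -/

open MeasureTheory

/-- The standard normal density `φ(x) = (2π)^{-1/2} exp(-x²/2)`. -/
noncomputable def stdNormalPDF (x : ℝ) : ℝ :=
  (Real.sqrt (2 * Real.pi))⁻¹ * Real.exp (-x ^ 2 / 2)

/-- The standard normal complementary CDF `Φᶜ(x) = ∫_x^∞ φ(u) du`. -/
noncomputable def stdNormalCCDF (x : ℝ) : ℝ :=
  ∫ u in Set.Ioi x, stdNormalPDF u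

open Real Filter Set Topology

lemma stdNormalPDF_pos (x : ℝ) : 0 < stdNormalPDF x := by
  unfold stdNormalPDF
  positivity

lemma integrable_stdNormalPDF : Integrable stdNormalPDF := by
  convert (integrable_exp_neg_mul_sq (by norm_num : (0 : ℝ) < 1 / 2)).const_mul (√(2 * π))⁻¹
    using 2 with x
  unfold stdNormalPDF
  ring_nf

lemma hasDerivAt_stdNormalPDF (x : ℝ) : HasDerivAt stdNormalPDF (-x * stdNormalPDF x) x := by
  have h := (((hasDerivAt_pow 2 x).neg.div_const 2).exp).const_mul (√(2 * π))⁻¹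
  exact h.congr_deriv (by simp only [stdNormalPDF, Pi.neg_apply]; ring)

lemma tendsto_stdNormalPDF_atTop : Tendsto stdNormalPDF atTop (𝓝 0) := by
  have h : Tendsto (fun x : ℝ => -x ^ 2 / 2) atTop atBot :=
    (tendsto_neg_atTop_atBot.comp (tendsto_pow_atTop two_ne_zero)).atBot_div_const two_pos
  have h' := (tendsto_exp_atBot.comp h).const_mul (√(2 * π))⁻¹
  rwa [mul_zero] at h'

lemma hasDerivAt_neg_stdNormalPDF_mul_div (x : ℝ) :
    HasDerivAt (fun u => -(stdNormalPDF u * u / (u ^ 2 + 1)))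
      (stdNormalPDF x * (1 - 2 / (x ^ 2 + 1) ^ 2)) x := by
  have h := (((hasDerivAt_stdNormalPDF x).mul (hasDerivAt_id x)).div
    ((hasDerivAt_pow 2 x).add_const 1) (by positivity)).neg
  refine h.congr_deriv ?_
  simp only [Pi.mul_apply, id_eq]
  field_simp
  ring

lemma stdNormalPDF_mul_div_le_stdNormalCCDF (x : ℝ) :
    stdNormalPDF x * x / (x ^ 2 + 1) ≤ stdNormalCCDF x := by
  set g' := fun u : ℝ => stdNormalPDF u * (1 - 2 / (u ^ 2 + 1) ^ 2)
  have hg'_le : ∀ u, |g' u| ≤ stdNormalPDF u := fun u => by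
    have h1 : 1 ≤ (u ^ 2 + 1) ^ 2 := one_le_pow₀ (by nlinarith)
    have h2 : 2 / (u ^ 2 + 1) ^ 2 ≤ 2 := div_le_self zero_le_two h1
    rw [abs_mul, abs_of_pos (stdNormalPDF_pos u)]
    exact mul_le_of_le_one_right (stdNormalPDF_pos u).le
      (abs_le.2 ⟨by linarith, by linarith [show 0 ≤ 2 / (u ^ 2 + 1) ^ 2 by positivity]⟩)
  have hg'_int : IntegrableOn g' (Ioi x) := by
    refine integrable_stdNormalPDF.integrableOn.mono' ?_ (ae_of_all _ hg'_le)
    have : Continuous g' := by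
      simp only [g', stdNormalPDF]
      fun_prop (disch := intro u; positivity)
    exact this.aestronglyMeasurable
  have hlim : Tendsto (fun u => -(stdNormalPDF u * u / (u ^ 2 + 1))) atTop (𝓝 0) := by
    refine squeeze_zero_norm' ?_ tendsto_stdNormalPDF_atTop
    filter_upwards [eventually_ge_atTop 0] with u hu
    rw [norm_neg, norm_of_nonneg (by positivity [(stdNormalPDF_pos u).le]), mul_div_assoc]
    exact mul_le_of_le_one_right (stdNormalPDF_pos u).le
      ((div_le_one (by positivity)).2 (by nlinarith [sq_nonneg (u - 1)]))
  have hftc := integral_Ioi_of_hasDerivAt_of_tendsto'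
    (fun u _ => hasDerivAt_neg_stdNormalPDF_mul_div u) hg'_int hlim
  calc stdNormalPDF x * x / (x ^ 2 + 1) = ∫ u in Ioi x, g' u := by rw [hftc]; ring
    _ ≤ stdNormalCCDF x := setIntegral_mono hg'_int integrable_stdNormalPDF.integrableOn
        fun u => (le_abs_self _).trans (hg'_le u)

lemma stdNormalPDF_eq_of_sq_eq {T c b : ℝ} (hT : 0 < T) (hc : 0 < c)
    (hb : b ^ 2 = 2 * log T - 2 * log c) : stdNormalPDF b = c / (√(2 * π) * T) := by
  have h : -b ^ 2 / 2 = log c - log T := by rw [hb]; ring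
  rw [stdNormalPDF, h, exp_sub, exp_log hc, exp_log hT]
  ring

lemma le_half_mul_stdNormalCCDF_of_sq_eq {T c b : ℝ} (hT : 0 < T) (hc : 0 < c)
    (hb : b ^ 2 = 2 * log T - 2 * log c) :
    c / √(2 * π) * b / (2 * (b ^ 2 + 1)) ≤ T / 2 * stdNormalCCDF b := by
  calc c / √(2 * π) * b / (2 * (b ^ 2 + 1)) = T / 2 * (stdNormalPDF b * b / (b ^ 2 + 1)) := by
        rw [stdNormalPDF_eq_of_sq_eq hT hc hb]
        field_simp
    _ ≤ T / 2 * stdNormalCCDF b :=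
        mul_le_mul_of_nonneg_left (stdNormalPDF_mul_div_le_stdNormalCCDF b) (by positivity)

lemma two_mul_log_mul_rpow_three_halves {L : ℝ} (hL : 0 < L) :
    2 * log (3 * (2 : ℝ) ^ (-(3 : ℝ) / 2) * L ^ ((3 : ℝ) / 2)) = 3 * log L + log (9 / 8) := by
  rw [log_mul (by positivity) (by positivity), log_mul (by norm_num) (by positivity),
    log_rpow two_pos, log_rpow hL, log_div (by norm_num) (by norm_num),
    show (9 : ℝ) = 3 ^ 2 by norm_num, show (8 : ℝ) = 2 ^ 3 by norm_num, log_pow, log_pow]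
  push_cast
  ring

lemma rpow_three_halves {x : ℝ} (hx : 0 ≤ x) : x ^ ((3 : ℝ) / 2) = x * √x := by
  rw [sqrt_eq_rpow, ← rpow_one_add' hx (by norm_num)]
  norm_num

lemma mul_rpow_three_halves_div_sqrt_two_pi {L : ℝ} (hL : 0 ≤ L) :
    3 * (2 : ℝ) ^ (-(3 : ℝ) / 2) * L ^ ((3 : ℝ) / 2) / √(2 * π) = 3 * L * √L / (4 * √π) := by
  have h2 : (2 : ℝ) ^ (-(3 : ℝ) / 2) = (2 * √2)⁻¹ := by
    rw [neg_div, rpow_neg zero_le_two, rpow_three_halves zero_le_two]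
  rw [h2, rpow_three_halves hL, sqrt_mul zero_le_two]
  field_simp
  rw [sq_sqrt zero_le_two]
  ring

lemma ten_le_two_mul_log {T : ℝ} (hT : 500 ≤ T) : 10 ≤ 2 * log T := by
  have h : exp 5 ≤ T := by
    calc exp 5 = exp 1 ^ 5 := by rw [← exp_nat_mul]; norm_num
      _ ≤ 3 ^ 5 := pow_le_pow_left₀ (exp_pos 1).le exp_one_lt_three.le 5
      _ ≤ T := by linarith
  linarith [(le_log_iff_exp_le (by linarith)).2 h]

lemma two_le_sub_three_mul_log_sub_log {L : ℝ} (hL : 10 ≤ L) :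
    2 ≤ L - (3 * log L + log (9 / 8)) := by
  have hlogL : log L ≤ 3 * log 2 + (L / 8 - 1) := by
    have h := log_le_sub_one_of_pos (show 0 < L / 8 by positivity)
    have h8 : log 8 = 3 * log 2 := by
      rw [show (8 : ℝ) = 2 ^ 3 by norm_num, log_pow]
      norm_num
    rw [log_div (by positivity) (by norm_num)] at h
    linarith
  have hlog98 := log_le_sub_one_of_pos (show (0 : ℝ) < 9 / 8 by norm_num)
  linarith [log_two_lt_d9]

lemma two_mul_add_one_le_three_mul_sqrt_mul_sqrt {a L : ℝ} (ha : 2 ≤ a) (haL : a ≤ L) :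
    2 * (a + 1) ≤ 3 * (√L * √a) := by
  have h : a ≤ √L * √a := by
    calc a = √a * √a := (mul_self_sqrt (by linarith)).symm
      _ ≤ √L * √a := by gcongr
  linarith

lemma log_div_le_half_mul_stdNormalCCDF {T b : ℝ} (hT : 500 ≤ T)
    (hb : b = √(2 * log T
      - 2 * log (3 * (2 : ℝ) ^ (-(3 : ℝ) / 2) * (2 * log T) ^ ((3 : ℝ) / 2)))) :
    log T / (2 * √π) ≤ T / 2 * stdNormalCCDF b := by
  have hT0 : 0 < T := by linarith
  set L := 2 * log T with hL_def
  have hL : 10 ≤ L := ten_le_two_mul_log hT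
  set c := 3 * (2 : ℝ) ^ (-(3 : ℝ) / 2) * L ^ ((3 : ℝ) / 2)
  have hlogc : 2 * log c = 3 * log L + log (9 / 8) :=
    two_mul_log_mul_rpow_three_halves (by linarith)
  set a := L - 2 * log c
  have ha : 2 ≤ a := by linarith [two_le_sub_three_mul_log_sub_log hL]
  have haL : a ≤ L := by
    linarith [log_nonneg (by linarith : (1 : ℝ) ≤ L), log_nonneg (by norm_num : (1 : ℝ) ≤ 9 / 8)]
  have hb2 : b ^ 2 = a := by rw [hb, sq_sqrt (by linarith)]
  calc log T / (2 * √π) = L / (4 * √π) * 1 := by rw [hL_def]; ring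
    _ ≤ L / (4 * √π) * (3 * (√L * b) / (2 * (a + 1))) := by
        gcongr
        rw [one_le_div (by positivity), hb]
        exact two_mul_add_one_le_three_mul_sqrt_mul_sqrt ha haL
    _ = c / √(2 * π) * b / (2 * (b ^ 2 + 1)) := by
        rw [mul_rpow_three_halves_div_sqrt_two_pi (by linarith), hb2]
        ring
    _ ≤ T / 2 * stdNormalCCDF b := le_half_mul_stdNormalCCDF_of_sq_eq hT0 (by positivity) hb2

/-- The 'bounding the left factor' step in the proof of the paper's main theorem:
`1 − e^{(T/2)·ei'(b)} ≥ 1 − T^{−1/(2√π)}` where `ei'(b) = −Φᶜ(b)`. -/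
theorem stmt16 (T : ℕ) (hT : 500 ≤ T)
    (b : ℝ) (hb : b = Real.sqrt (2 * Real.log T
      - 2 * Real.log (3 * (2 : ℝ) ^ (-(3 : ℝ) / 2) * (2 * Real.log T) ^ ((3 : ℝ) / 2)))) :
    1 - Real.exp (-((T : ℝ) / 2) * stdNormalCCDF b)
      ≥ 1 - (T : ℝ) ^ (-(1 / (2 * Real.sqrt Real.pi))) := by
  have hT0 : (0 : ℝ) < T := by positivity
  rw [ge_iff_le, sub_le_sub_iff_left, rpow_def_of_pos hT0, exp_le_exp, mul_neg, mul_one_div,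
    neg_mul, neg_le_neg_iff]
  exact log_div_le_half_mul_stdNormalCCDF (by exact_mod_cast hT) hb
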